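/- Let λ ∈ (-1,1) and θ = arccos λ ∈ (0,π). Let f⁺ = (f⁺_n)_{n≥-1} be a solution of the Jacobi equation at spectral parameter λ such that f⁺_n e^{inθ} → 1 as n → ∞. Then f⁺_{-1} ≠ 0 (equivalently, the boundary value ω(λ+i0) = -f⁺_{-1}/2 of the Wronskian of P and the Jost solution does not vanish on (-1,1)). -/

import Mathlib

/-!
Since `λ` is real, `f` and `f̄` solve the same Jacobi equation, so their Wronskian
`a_n (f_n f̄_{n+1} - f_{n+1} f̄_n) = 2i a_n Im (f_n f̄_{n+1})` does not depend on `n`; its value at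
`n = -1` is `i Im (f_{-1} f̄_0)`, which vanishes if `f_{-1} = 0`. On the other hand
`f_n ≈ e^{-inθ}` gives `f_n f̄_{n+1} → e^{iθ}`, whose imaginary part `sin θ` is positive.
-/

open Filter Finset MeasureTheory

noncomputable section

/-- Extended coefficient sequence with `a₋₁ = 1/2`. -/
def aext (a : ℕ → ℝ) : ℤ → ℝ := fun k => if k < 0 then 1/2 else a k.toNat

/-- `u : ℤ → ℂ` (restricted to indices `n ≥ -1`) solves the Jacobi equation
`a_{n-1} u_{n-1} + b_n u_n + a_n u_{n+1} = z u_n` for all `n ≥ 0`, with `a_{-1} = 1/2`. -/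
def IsJacobiSol (a b : ℕ → ℝ) (z : ℂ) (u : ℤ → ℂ) : Prop :=
  ∀ n : ℕ, (aext a ((n : ℤ) - 1) : ℂ) * u ((n : ℤ) - 1) + (b n : ℂ) * u (n : ℤ)
      + (a n : ℂ) * u ((n : ℤ) + 1) = z * u (n : ℤ)

/-- The perturbation `V = H - H₀` applied to a sequence:
`(Vf)_m = (a_{m-1} - 1/2) f_{m-1} + b_m f_m + (a_m - 1/2) f_{m+1}` with `a_{-1} = 1/2`. -/
def jV (a b : ℕ → ℝ) (f : ℤ → ℂ) (m : ℕ) : ℂ :=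
  ((aext a ((m : ℤ) - 1) - 1/2 : ℝ) : ℂ) * f ((m : ℤ) - 1) + (b m : ℂ) * f (m : ℤ)
    + ((a m - 1/2 : ℝ) : ℂ) * f ((m : ℤ) + 1)

open Topology ComplexConjugate

section JacobiWronskian

variable {a b : ℕ → ℝ} {z : ℂ} {u v : ℤ → ℂ}

@[simp]
lemma aext_natCast (a : ℕ → ℝ) (n : ℕ) : aext a n = a n := by
  simp [aext]

lemma IsJacobiSol.conj (hu : IsJacobiSol a b z u) :
    IsJacobiSol a b (conj z) (fun n => conj (u n)) := fun n => by
  simpa only [map_add, map_mul, Complex.conj_ofReal] using congrArg conj (hu n)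

def jacobiWronskian (a : ℕ → ℝ) (u v : ℤ → ℂ) (n : ℤ) : ℂ :=
  aext a n * (u n * v (n + 1) - u (n + 1) * v n)

lemma IsJacobiSol.jacobiWronskian_eq_sub_one (hu : IsJacobiSol a b z u)
    (hv : IsJacobiSol a b z v) (n : ℕ) :
    jacobiWronskian a u v n = jacobiWronskian a u v (n - 1) := by
  simp only [jacobiWronskian, sub_add_cancel, aext_natCast]
  linear_combination u n * hv n - v n * hu n

lemma IsJacobiSol.jacobiWronskian_eq_neg_one (hu : IsJacobiSol a b z u)
    (hv : IsJacobiSol a b z v) (n : ℕ) :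
    jacobiWronskian a u v n = jacobiWronskian a u v (-1) := by
  induction n with
  | zero => simpa using hu.jacobiWronskian_eq_sub_one hv 0
  | succ n ih => simpa [← ih] using hu.jacobiWronskian_eq_sub_one hv (n + 1)

lemma jacobiWronskian_conj_right_self (a : ℕ → ℝ) (u : ℤ → ℂ) (n : ℤ) :
    jacobiWronskian a u (fun k => conj (u k)) n
      = 2 * aext a n * (u n * conj (u (n + 1))).im * Complex.I := by
  have hswap : u (n + 1) * conj (u n) = conj (u n * conj (u (n + 1))) := by
    simp [mul_comm]
  rw [jacobiWronskian, hswap, Complex.sub_conj]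
  push_cast
  ring

end JacobiWronskian

lemma tendsto_mul_conj_succ_of_tendsto_mul_exp {u : ℕ → ℂ} {θ : ℝ}
    (hu : Tendsto (fun n : ℕ => u n * Complex.exp (Complex.I * n * θ)) atTop (𝓝 1)) :
    Tendsto (fun n => u n * conj (u (n + 1))) atTop (𝓝 (Complex.exp (θ * Complex.I))) := by
  set g : ℕ → ℂ := fun n => u n * Complex.exp (Complex.I * n * θ)
  have hg_succ : Tendsto (fun n => conj (g (n + 1))) atTop (𝓝 1) := by
    simpa only [Function.comp_def, map_one] using
      (Complex.continuous_conj.tendsto 1).comp (hu.comp (tendsto_add_atTop_nat 1))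
  have hphase (n : ℕ) :
      u n * conj (u (n + 1)) = g n * conj (g (n + 1)) * Complex.exp (θ * Complex.I) := by
    simp only [g, map_mul, ← Complex.exp_conj, Complex.conj_ofReal, Complex.conj_I,
      Nat.cast_add, Nat.cast_one, map_add, map_one, map_natCast]
    have hexp : Complex.exp (Complex.I * n * θ) * Complex.exp (-Complex.I * (n + 1) * θ) *
        Complex.exp (θ * Complex.I) = 1 := by
      rw [← Complex.exp_add, ← Complex.exp_add]
      convert Complex.exp_zero using 2
      ring
    linear_combination (-(u n * conj (u (n + 1)))) * hexp
  simpa [hphase] using (hu.mul hg_succ).mul_const (Complex.exp (θ * Complex.I))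

/-- the boundary value of the Wronskian does not vanish on `(-1,1)`:
the Jost solution satisfies `f_{-1} ≠ 0`. -/
theorem jost_wronskian_nonvanishing
    (a b : ℕ → ℝ) (ha : ∀ n, 0 < a n)
    (lam : ℝ) (hl1 : -1 < lam) (hl2 : lam < 1)
    (θ : ℝ) (hθ : θ = Real.arccos lam)
    (f : ℤ → ℂ) (hf : IsJacobiSol a b (lam : ℂ) f)
    (hasym : Filter.Tendsto (fun n : ℕ => f (n : ℤ) * Complex.exp (Complex.I * n * θ))
      Filter.atTop (nhds 1)) :
    f (-1) ≠ 0 := by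
  intro hf_neg_one
  have hf_conj : IsJacobiSol a b lam (fun n => conj (f n)) := by
    simpa using hf.conj
  have him_zero (n : ℕ) : (f n * conj (f (n + 1))).im = 0 := by
    have hW := hf.jacobiWronskian_eq_neg_one hf_conj n
    simp only [jacobiWronskian_conj_right_self, hf_neg_one, zero_mul, Complex.zero_im,
      Complex.ofReal_zero, mul_zero, aext_natCast] at hW
    simpa only [mul_eq_zero, two_ne_zero, Complex.ofReal_eq_zero, (ha n).ne', Complex.I_ne_zero,
      false_or, or_false] using hW
  have hsin_pos : 0 < Real.sin θ :=
    hθ ▸ Real.sin_pos_of_pos_of_lt_pi (Real.arccos_pos.2 hl2) (Real.arccos_lt_pi.2 hl1)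
  have him_lim : Tendsto (fun n : ℕ => (f n * conj (f (n + 1))).im) atTop (𝓝 (Real.sin θ)) := by
    have := (Complex.continuous_im.tendsto _).comp
      (tendsto_mul_conj_succ_of_tendsto_mul_exp (u := fun n : ℕ => f n) hasym)
    simpa only [Function.comp_def, Complex.exp_ofReal_mul_I_im, Nat.cast_add, Nat.cast_one]
      using this
  refine hsin_pos.ne' (tendsto_nhds_unique him_lim ?_)
  simpa only [him_zero] using tendsto_const_nhds
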